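/- (Newton's method as the special case n_i ≡ 1.) The Newton sequence defined by x₀ = 0 and x_{k+1} = x_k − (F'_{x_k})⁻¹F(x_k) is well defined (each F'_{x_k} is invertible), entrywise monotonically increasing with 0 ≤ x_k and eᵀx_k ≤ 1 for all k, and converges to a vector x* with 0 ≤ x* entrywise, eᵀx* ≤ 1, and x* = αR(x* ⊗ x*) + (1−α)v. -/
import Mathlib


open Matrix BigOperators Finset Filter

noncomputable section

/-- Kronecker product of two vectors: `(u ⊗ w)_{(i,j)} = u_i w_j`. -/
def kron {n : ℕ} (u w : Fin n → ℝ) : Fin n × Fin n → ℝ := fun p => u p.1 * w p.2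

/-- `u ⊗ I` : the `n² × n` Kronecker product of a vector with the identity,
so that `(u ⊗ I) w = u ⊗ w`. -/
def kronVecId {n : ℕ} (u : Fin n → ℝ) : Matrix (Fin n × Fin n) (Fin n) ℝ :=
  Matrix.of fun p k => u p.1 * (if p.2 = k then (1 : ℝ) else 0)

/-- `I ⊗ u` : the `n² × n` Kronecker product of the identity with a vector,
so that `(I ⊗ u) w = w ⊗ u`. -/
def idKronVec {n : ℕ} (u : Fin n → ℝ) : Matrix (Fin n × Fin n) (Fin n) ℝ :=
  Matrix.of fun p k => (if p.1 = k then (1 : ℝ) else 0) * u p.2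

/-- `F(x) = x − α R (x ⊗ x) − (1 − α) v`. -/
def Fmap {n : ℕ} (α : ℝ) (R : Matrix (Fin n) (Fin n × Fin n) ℝ) (v : Fin n → ℝ)
    (x : Fin n → ℝ) : Fin n → ℝ :=
  x - α • R.mulVec (kron x x) - (1 - α) • v

/-- `F'ₓ = I − α R (x ⊗ I + I ⊗ x)`. -/
def Fprime {n : ℕ} (α : ℝ) (R : Matrix (Fin n) (Fin n × Fin n) ℝ)
    (x : Fin n → ℝ) : Matrix (Fin n) (Fin n) ℝ :=
  1 - α • (R * (kronVecId x + idKronVec x))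

lemma N_mulVec {n : ℕ} (x d : Fin n → ℝ) :
    (kronVecId x + idKronVec x).mulVec d = kron x d + kron d x := by
  funext p
  simp only [Matrix.mulVec, Matrix.add_apply, kronVecId, idKronVec, kron, dotProduct,
    Matrix.of_apply, Pi.add_apply, mul_add, add_mul, mul_ite, ite_mul, mul_one, one_mul,
    mul_zero, zero_mul, Finset.sum_add_distrib, Finset.sum_ite_eq, Finset.sum_ite_eq',
    Finset.mem_univ, if_true]
  ring

lemma Fprime_mulVec {n : ℕ} (α : ℝ) (R : Matrix (Fin n) (Fin n × Fin n) ℝ)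
    (x d : Fin n → ℝ) :
    (Fprime α R x).mulVec d = d - α • R.mulVec (kron x d + kron d x) := by
  rw [Fprime, Matrix.sub_mulVec, Matrix.one_mulVec, Matrix.smul_mulVec,
    ← Matrix.mulVec_mulVec, N_mulVec]

lemma kron_expand {n : ℕ} (x d : Fin n → ℝ) :
    kron (x + d) (x + d) = kron x x + (kron x d + kron d x) + kron d d := by
  funext p; simp [kron]; ring

lemma Fmap_expand {n : ℕ} (α : ℝ) (R : Matrix (Fin n) (Fin n × Fin n) ℝ)
    (v x d : Fin n → ℝ) :
    Fmap α R v (x + d) =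
      Fmap α R v x + (Fprime α R x).mulVec d - α • R.mulVec (kron d d) := by
  rw [Fmap, Fmap, Fprime_mulVec, kron_expand, Matrix.mulVec_add, Matrix.mulVec_add,
    smul_add, smul_add]
  abel

lemma key_zero {n : ℕ} (M : Matrix (Fin n) (Fin n) ℝ) (c : ℝ) (hc : c < 1)
    (hM : ∀ i j, 0 ≤ M i j) (hcol : ∀ j, ∑ i, M i j ≤ c)
    (y : Fin n → ℝ) (hy : ∀ i, 0 ≤ y i) (hle : ∀ i, y i ≤ M.mulVec y i) :
    ∀ i, y i = 0 := by
  have hsum : ∑ i, y i ≤ c * ∑ i, y i := by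
    calc ∑ i, y i ≤ ∑ i, M.mulVec y i := Finset.sum_le_sum fun i _ => hle i
    _ = ∑ j, (∑ i, M i j) * y j := by
        simp only [Matrix.mulVec, dotProduct]
        rw [Finset.sum_comm]
        simp [Finset.sum_mul]
    _ ≤ ∑ j, c * y j := Finset.sum_le_sum fun j _ => mul_le_mul_of_nonneg_right (hcol j) (hy j)
    _ = c * ∑ i, y i := by rw [Finset.mul_sum]
  have h0 : 0 ≤ ∑ i, y i := Finset.sum_nonneg fun i _ => hy i
  have : ∑ i, y i = 0 := by nlinarith
  intro i
  have := (Finset.sum_eq_zero_iff_of_nonneg (fun i _ => hy i)).mp this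
  exact this i (Finset.mem_univ i)

lemma key_nonneg {n : ℕ} (M : Matrix (Fin n) (Fin n) ℝ) (c : ℝ) (hc : c < 1)
    (hM : ∀ i j, 0 ≤ M i j) (hcol : ∀ j, ∑ i, M i j ≤ c)
    (d b : Fin n → ℝ) (hdb : ∀ i, d i - M.mulVec d i = b i) (hb : ∀ i, 0 ≤ b i) :
    ∀ i, 0 ≤ d i := by
  set y : Fin n → ℝ := fun i => max (-(d i)) 0 with hy
  have hy0 : ∀ i, 0 ≤ y i := fun i => le_max_right _ _
  have hdy : ∀ i, -(d i) ≤ y i := fun i => le_max_left _ _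
  have hMdy : ∀ i, M.mulVec (fun j => -(d j)) i ≤ M.mulVec y i := by
    intro i
    simp only [Matrix.mulVec, dotProduct]
    exact Finset.sum_le_sum fun j _ => mul_le_mul_of_nonneg_left (hdy j) (hM i j)
  have hle : ∀ i, y i ≤ M.mulVec y i := by
    intro i
    rcases le_or_gt 0 (d i) with h | h
    · have : y i = 0 := max_eq_right (by linarith)
      rw [this]
      simp only [Matrix.mulVec, dotProduct]
      exact Finset.sum_nonneg fun j _ => mul_nonneg (hM i j) (hy0 j)
    · have hyi : y i = -(d i) := max_eq_left (by linarith)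
      have hMd : M.mulVec (fun j => -(d j)) i = -(M.mulVec d i) := by
        simp only [Matrix.mulVec, dotProduct, mul_neg, Finset.sum_neg_distrib]
      have := hdb i
      have hbi := hb i
      have : -(d i) ≤ -(M.mulVec d i) := by linarith
      calc y i = -(d i) := hyi
        _ ≤ -(M.mulVec d i) := this
        _ = M.mulVec (fun j => -(d j)) i := hMd.symm
        _ ≤ M.mulVec y i := hMdy i
  have hz := key_zero M c hc hM hcol y hy0 hle
  intro i
  have := hz i
  have := hdy i
  rw [hz i] at this
  linarith

lemma key_isUnit {n : ℕ} (M : Matrix (Fin n) (Fin n) ℝ) (c : ℝ) (hc : c < 1)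
    (hM : ∀ i j, 0 ≤ M i j) (hcol : ∀ j, ∑ i, M i j ≤ c) :
    IsUnit (1 - M) := by
  rw [Matrix.isUnit_iff_isUnit_det, isUnit_iff_ne_zero]
  intro hdet
  obtain ⟨z, hz, hz0⟩ := Matrix.exists_mulVec_eq_zero_iff.mpr hdet
  have h1 : ∀ i, z i - M.mulVec z i = 0 := by
    intro i
    have := congrFun hz0 i
    rwa [Matrix.sub_mulVec, Matrix.one_mulVec] at this
  have h2 : ∀ i, (-z) i - M.mulVec (-z) i = 0 := by
    intro i
    have := h1 i
    simp only [Matrix.mulVec_neg, Pi.neg_apply]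
    linarith
  have hp := key_nonneg M c hc hM hcol z 0 (fun i => by simpa using h1 i) (fun i => le_refl 0)
  have hm := key_nonneg M c hc hM hcol (-z) 0 (fun i => by simpa using h2 i) (fun i => le_refl 0)
  apply hz
  funext i
  have h3 := hm i
  rw [Pi.neg_apply] at h3
  have h4 := hp i
  simp only [Pi.zero_apply]
  linarith

lemma N_colsum {n : ℕ} (x : Fin n → ℝ) (j : Fin n) :
    ∑ p : Fin n × Fin n, (kronVecId x + idKronVec x) p j = 2 * ∑ i, x i := by
  simp only [Matrix.add_apply, kronVecId, idKronVec, Matrix.of_apply]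
  rw [Fintype.sum_prod_type]
  simp [Finset.sum_add_distrib, mul_ite, ite_mul, mul_one, mul_zero, one_mul, zero_mul,
    Finset.sum_ite_eq, Finset.sum_ite_eq']
  ring

lemma N_nonneg {n : ℕ} (x : Fin n → ℝ) (hx : ∀ i, 0 ≤ x i) (p : Fin n × Fin n) (j : Fin n) :
    0 ≤ (kronVecId x + idKronVec x) p j := by
  simp only [Matrix.add_apply, kronVecId, idKronVec, Matrix.of_apply]
  apply add_nonneg
  · exact mul_nonneg (hx _) (by positivity)
  · exact mul_nonneg (by positivity) (hx _)

lemma M_entry_nonneg {n : ℕ} (α : ℝ) (hα : 0 ≤ α) (R : Matrix (Fin n) (Fin n × Fin n) ℝ)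
    (hR0 : ∀ i p, 0 ≤ R i p) (x : Fin n → ℝ) (hx : ∀ i, 0 ≤ x i) (i j : Fin n) :
    0 ≤ (α • (R * (kronVecId x + idKronVec x))) i j := by
  simp only [Matrix.smul_apply, smul_eq_mul, Matrix.mul_apply]
  exact mul_nonneg hα (Finset.sum_nonneg fun p _ => mul_nonneg (hR0 i p) (N_nonneg x hx p j))

lemma M_colsum {n : ℕ} (α : ℝ) (R : Matrix (Fin n) (Fin n × Fin n) ℝ)
    (hRcol : ∀ p, ∑ i, R i p = 1) (x : Fin n → ℝ) (j : Fin n) :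
    ∑ i, (α • (R * (kronVecId x + idKronVec x))) i j = α * (2 * ∑ i, x i) := by
  simp only [Matrix.smul_apply, smul_eq_mul, Matrix.mul_apply]
  rw [← Finset.mul_sum, Finset.sum_comm]
  congr 1
  calc ∑ p : Fin n × Fin n, ∑ i, R i p * (kronVecId x + idKronVec x) p j
      = ∑ p : Fin n × Fin n, (∑ i, R i p) * (kronVecId x + idKronVec x) p j := by
        simp [Finset.sum_mul]
    _ = ∑ p : Fin n × Fin n, (kronVecId x + idKronVec x) p j := by
        simp [hRcol]
    _ = 2 * ∑ i, x i := N_colsum x j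

lemma sum_mulVec {n : ℕ} (R : Matrix (Fin n) (Fin n × Fin n) ℝ)
    (hRcol : ∀ p, ∑ i, R i p = 1) (w : Fin n × Fin n → ℝ) :
    ∑ i, R.mulVec w i = ∑ p : Fin n × Fin n, w p := by
  simp only [Matrix.mulVec, dotProduct]
  rw [Finset.sum_comm]
  calc ∑ p : Fin n × Fin n, ∑ i, R i p * w p
      = ∑ p : Fin n × Fin n, (∑ i, R i p) * w p := by simp [Finset.sum_mul]
    _ = ∑ p : Fin n × Fin n, w p := by simp [hRcol]

lemma sum_kron {n : ℕ} (x : Fin n → ℝ) :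
    ∑ p : Fin n × Fin n, kron x x p = (∑ i, x i) * (∑ i, x i) := by
  rw [Fintype.sum_prod_type, Finset.sum_mul_sum]
  rfl

lemma newton_step {n : ℕ} {α : ℝ} (hα0 : 0 < α) (hα : α < 1 / 2)
    {R : Matrix (Fin n) (Fin n × Fin n) ℝ} (hR0 : ∀ i p, 0 ≤ R i p)
    (hRcol : ∀ p, ∑ i, R i p = 1)
    {v : Fin n → ℝ} (hv0 : ∀ i, 0 ≤ v i) (hv1 : ∑ i, v i = 1)
    (y : Fin n → ℝ) (hy0 : ∀ i, 0 ≤ y i) (hy1 : ∑ i, y i ≤ 1)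
    (hF : ∀ i, Fmap α R v y i ≤ 0) :
    IsUnit (Fprime α R y) ∧
    (∀ i, y i ≤ (y - (Fprime α R y)⁻¹.mulVec (Fmap α R v y)) i) ∧
    (∀ i, 0 ≤ (y - (Fprime α R y)⁻¹.mulVec (Fmap α R v y)) i) ∧
    (∑ i, (y - (Fprime α R y)⁻¹.mulVec (Fmap α R v y)) i ≤ 1) ∧
    (∀ i, Fmap α R v (y - (Fprime α R y)⁻¹.mulVec (Fmap α R v y)) i ≤ 0) ∧
    Fmap α R v (y - (Fprime α R y)⁻¹.mulVec (Fmap α R v y)) =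
      -(α • R.mulVec (kron ((y - (Fprime α R y)⁻¹.mulVec (Fmap α R v y)) - y)
        ((y - (Fprime α R y)⁻¹.mulVec (Fmap α R v y)) - y))) := by
  set z := y - (Fprime α R y)⁻¹.mulVec (Fmap α R v y) with hz
  set My := α • (R * (kronVecId y + idKronVec y)) with hMy
  have hFp : Fprime α R y = 1 - My := rfl
  have hs0 : 0 ≤ ∑ i, y i := Finset.sum_nonneg fun i _ => hy0 i
  have hcol : ∀ j, ∑ i, My i j ≤ 2 * α := by
    intro j
    rw [hMy, M_colsum α R hRcol y j]
    nlinarith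
  have hc : 2 * α < 1 := by linarith
  have hMn : ∀ i j, 0 ≤ My i j := fun i j => M_entry_nonneg α hα0.le R hR0 y hy0 i j
  have hunit : IsUnit (Fprime α R y) := by rw [hFp]; exact key_isUnit My _ hc hMn hcol
  have hdet : IsUnit (Fprime α R y).det := (Matrix.isUnit_iff_isUnit_det _).mp hunit
  set d := z - y with hd
  have hzyd : z = y + d := by rw [hd]; abel
  have hFpd : (Fprime α R y).mulVec d = -(Fmap α R v y) := by
    have hdeq : d = -((Fprime α R y)⁻¹.mulVec (Fmap α R v y)) := by
      rw [hd, hz]; abel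
    rw [hdeq, Matrix.mulVec_neg, Matrix.mulVec_mulVec, Matrix.mul_nonsing_inv _ hdet,
      Matrix.one_mulVec]
  have hid : ∀ i, d i - My.mulVec d i = (-(Fmap α R v y)) i := by
    intro i
    have h := congrFun hFpd i
    rw [hFp, Matrix.sub_mulVec, Matrix.one_mulVec] at h
    simpa using h
  have hd0 : ∀ i, 0 ≤ d i :=
    key_nonneg My _ hc hMn hcol d _ hid (fun i => by simpa using neg_nonneg.mpr (hF i))
  have hzi : ∀ i, z i = y i + d i := fun i => congrFun hzyd i
  have hmono : ∀ i, y i ≤ z i := fun i => by rw [hzi i]; linarith [hd0 i]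
  have hz0 : ∀ i, 0 ≤ z i := fun i => by rw [hzi i]; linarith [hy0 i, hd0 i]
  have hFz : Fmap α R v z = -(α • R.mulVec (kron d d)) := by
    rw [hzyd, Fmap_expand, hFpd]
    abel
  have hFz0 : ∀ i, Fmap α R v z i ≤ 0 := by
    intro i
    rw [hFz]
    simp only [Pi.neg_apply, Pi.smul_apply, smul_eq_mul, neg_nonpos]
    apply mul_nonneg hα0.le
    simp only [Matrix.mulVec, dotProduct]
    exact Finset.sum_nonneg fun p _ => mul_nonneg (hR0 i p) (mul_nonneg (hd0 p.1) (hd0 p.2))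
  have hMyd : ∑ i, My.mulVec d i = (2 * α * ∑ i, y i) * ∑ j, d j := by
    simp only [Matrix.mulVec, dotProduct]
    rw [Finset.sum_comm]
    calc ∑ j, ∑ i, My i j * d j
        = ∑ j, (∑ i, My i j) * d j := by simp [Finset.sum_mul]
      _ = ∑ j, (α * (2 * ∑ i, y i)) * d j :=
          Finset.sum_congr rfl fun j _ => by rw [M_colsum α R hRcol y j]
      _ = (2 * α * ∑ i, y i) * ∑ j, d j := by rw [← Finset.mul_sum]; ring
  have hFy : ∑ i, Fmap α R v y i
      = (∑ i, y i) - α * ((∑ i, y i) * (∑ i, y i)) - (1 - α) := by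
    simp only [Fmap, Pi.sub_apply, Pi.smul_apply, smul_eq_mul]
    rw [Finset.sum_sub_distrib, Finset.sum_sub_distrib, ← Finset.mul_sum, ← Finset.mul_sum,
      sum_mulVec R hRcol, sum_kron, hv1, mul_one]
  have hsd : (∑ i, d i) - (2 * α * ∑ i, y i) * (∑ i, d i)
      = -((∑ i, y i) - α * ((∑ i, y i) * (∑ i, y i)) - (1 - α)) := by
    have h1 : ∑ i, (d i - My.mulVec d i) = ∑ i, (-(Fmap α R v y)) i :=
      Finset.sum_congr rfl fun i _ => hid i
    rw [Finset.sum_sub_distrib] at h1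
    simp only [Pi.neg_apply] at h1
    rw [Finset.sum_neg_distrib] at h1
    rw [hMyd, hFy] at h1
    linarith [h1]
  have hsum : ∑ i, z i ≤ 1 := by
    have hzsum : ∑ i, z i = ∑ i, y i + ∑ i, d i := by
      rw [hzyd]; simp [Finset.sum_add_distrib]
    rw [hzsum]
    have h2as : 2 * α * (∑ i, y i) < 1 := by nlinarith
    nlinarith [mul_nonneg hα0.le (sq_nonneg (1 - ∑ i, y i)), hsd, h2as]
  exact ⟨hunit, hmono, hz0, hsum, hFz0, hFz⟩


/-- The Newton sequence for `F(x) = 0`, started at `x₀ = 0`. -/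
def newtonSeq {n : ℕ} (α : ℝ) (R : Matrix (Fin n) (Fin n × Fin n) ℝ)
    (v : Fin n → ℝ) : ℕ → (Fin n → ℝ)
  | 0 => 0
  | (k + 1) => newtonSeq α R v k -
      (Fprime α R (newtonSeq α R v k))⁻¹.mulVec (Fmap α R v (newtonSeq α R v k))


theorem stmt15 {n : ℕ} (hn : 1 ≤ n) (α : ℝ) (hα0 : 0 < α) (hα : α < 1 / 2)
    (R : Matrix (Fin n) (Fin n × Fin n) ℝ) (hR0 : ∀ i p, 0 ≤ R i p)
    (hRcol : ∀ p, ∑ i, R i p = 1)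
    (v : Fin n → ℝ) (hv0 : 0 ≤ v) (hv1 : ∑ i, v i = 1) :
    (∀ k, IsUnit (Fprime α R (newtonSeq α R v k))) ∧
    (∀ k, newtonSeq α R v k ≤ newtonSeq α R v (k + 1)) ∧
    (∀ k, 0 ≤ newtonSeq α R v k) ∧
    (∀ k, ∑ i, newtonSeq α R v k i ≤ 1) ∧
    ∃ xstar : Fin n → ℝ,
      Filter.Tendsto (newtonSeq α R v) Filter.atTop (nhds xstar) ∧
      0 ≤ xstar ∧ ∑ i, xstar i ≤ 1 ∧
      xstar = α • R.mulVec (kron xstar xstar) + (1 - α) • v := by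
  have hv0' : ∀ i, 0 ≤ v i := fun i => hv0 i
  set x := newtonSeq α R v with hxdef
  have hsucc : ∀ k, x (k + 1) = x k - (Fprime α R (x k))⁻¹.mulVec (Fmap α R v (x k)) :=
    fun k => rfl
  -- the invariant
  have inv : ∀ k, (∀ i, 0 ≤ x k i) ∧ (∑ i, x k i ≤ 1) ∧ (∀ i, Fmap α R v (x k) i ≤ 0) := by
    intro k
    induction k with
    | zero =>
      have hx0 : x 0 = 0 := rfl
      have hk : kron (0 : Fin n → ℝ) 0 = 0 := by funext p; simp [kron]
      have hF0 : Fmap α R v 0 = -((1 - α) • v) := by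
        rw [Fmap, hk, Matrix.mulVec_zero, smul_zero]
        abel
      refine ⟨fun i => by rw [hx0]; exact le_refl 0, ?_, ?_⟩
      · rw [hx0]; simp
      · intro i
        rw [hx0, hF0]
        simp only [Pi.neg_apply, Pi.smul_apply, smul_eq_mul, neg_nonpos]
        exact mul_nonneg (by linarith) (hv0' i)
    | succ k ih =>
      obtain ⟨h0, h1, h2⟩ := ih
      obtain ⟨_, _, hz0, hzsum, hFz0, _⟩ :=
        newton_step hα0 hα hR0 hRcol hv0' hv1 (x k) h0 h1 h2
      rw [hsucc k]
      exact ⟨hz0, hzsum, hFz0⟩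
  have step := fun k => newton_step hα0 hα hR0 hRcol hv0' hv1 (x k)
    (inv k).1 (inv k).2.1 (inv k).2.2
  have hunit : ∀ k, IsUnit (Fprime α R (x k)) := fun k => (step k).1
  have hmono : ∀ k, x k ≤ x (k + 1) := by
    intro k
    rw [hsucc k]
    intro i
    exact (step k).2.1 i
  have hnn : ∀ k, (0 : Fin n → ℝ) ≤ x k := fun k i => (inv k).1 i
  have hsum1 : ∀ k, ∑ i, x k i ≤ 1 := fun k => (inv k).2.1
  refine ⟨hunit, hmono, hnn, hsum1, ?_⟩
  -- convergence
  have hmono' : ∀ i, Monotone fun k => x k i := by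
    intro i
    apply monotone_nat_of_le_succ
    intro k
    exact hmono k i
  have hbdd : ∀ k i, x k i ≤ 1 := by
    intro k i
    calc x k i ≤ ∑ j, x k j :=
          Finset.single_le_sum (fun j _ => (inv k).1 j) (Finset.mem_univ i)
      _ ≤ 1 := hsum1 k
  set xstar : Fin n → ℝ := fun i => ⨆ k, x k i with hxs
  have hb : ∀ i, BddAbove (Set.range fun k => x k i) := by
    intro i
    exact ⟨1, by rintro _ ⟨k, rfl⟩; exact hbdd k i⟩
  have htendi : ∀ i, Tendsto (fun k => x k i) atTop (nhds (xstar i)) := by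
    intro i
    exact tendsto_atTop_ciSup (hmono' i) (hb i)
  have htend : Tendsto x atTop (nhds xstar) := tendsto_pi_nhds.mpr htendi
  have hxs0 : (0 : Fin n → ℝ) ≤ xstar := by
    intro i
    exact le_trans ((inv 0).1 i) (le_ciSup (hb i) 0)
  have hxsum : ∑ i, xstar i ≤ 1 := by
    have hts : Tendsto (fun k => ∑ i, x k i) atTop (nhds (∑ i, xstar i)) :=
      tendsto_finset_sum _ fun i _ => htendi i
    exact le_of_tendsto' hts hsum1
  -- continuity facts
  have hc1 : Continuous fun y : Fin n → ℝ => R.mulVec (kron y y) := by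
    apply continuous_pi
    intro i
    simp only [Matrix.mulVec, dotProduct, kron]
    exact continuous_finset_sum _ fun p _ =>
      continuous_const.mul ((continuous_apply p.1).mul (continuous_apply p.2))
  have hcF : Continuous fun y : Fin n → ℝ => Fmap α R v y := by
    unfold Fmap
    exact (continuous_id.sub (hc1.const_smul α)).sub continuous_const
  have hg : Continuous fun y : Fin n → ℝ => -(α • R.mulVec (kron y y)) :=
    (hc1.const_smul α).neg
  -- d k → 0
  have hdk : Tendsto (fun k => x (k + 1) - x k) atTop (nhds 0) := by
    have h1 : Tendsto (fun k => x (k + 1)) atTop (nhds xstar) :=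
      htend.comp (tendsto_add_atTop_nat 1)
    simpa using h1.sub htend
  -- F(x (k+1)) = -(α • R (d ⊗ d))
  have hFk : ∀ k, Fmap α R v (x (k + 1)) =
      -(α • R.mulVec (kron (x (k + 1) - x k) (x (k + 1) - x k))) := by
    intro k
    have h := (step k).2.2.2.2.2
    rw [hsucc k]
    exact h
  have hlim1 : Tendsto (fun k => Fmap α R v (x (k + 1))) atTop (nhds (Fmap α R v xstar)) :=
    (hcF.tendsto xstar).comp (htend.comp (tendsto_add_atTop_nat 1))
  have hlim2 : Tendsto (fun k => Fmap α R v (x (k + 1))) atTop (nhds 0) := by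
    have h2 : Tendsto (fun k => -(α • R.mulVec (kron (x (k+1) - x k) (x (k+1) - x k))))
        atTop (nhds (-(α • R.mulVec (kron (0 : Fin n → ℝ) 0)))) :=
      (hg.tendsto 0).comp hdk
    have hk0 : kron (0 : Fin n → ℝ) 0 = 0 := by funext p; simp [kron]
    rw [hk0, Matrix.mulVec_zero, smul_zero, neg_zero] at h2
    exact h2.congr fun k => (hFk k).symm
  have hF0 : Fmap α R v xstar = 0 := tendsto_nhds_unique hlim1 hlim2
  refine ⟨xstar, htend, hxs0, hxsum, ?_⟩
  have h0 := hF0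
  rw [Fmap] at h0
  funext i
  have hh := congrFun h0 i
  simp only [Pi.sub_apply, Pi.zero_apply, Pi.add_apply] at hh ⊢
  linarith
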